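/- Let (R, Δ) be an odd form ring with a hyperbolic pair η. Then the elementary dilation map D^η : (R_{ηη})* → U(R, Δ), given by β(D^η(a)) = a + conj(a)⁻¹ − e_{|η|} and γ(D^η(a)) = q_{−η}·(conj(a)⁻¹ − e_{−η}) ∔ q_η·(a − e_η) ∸ φ(a − e_η), is a well-defined injective group homomorphism, and D^{−η}(a) = D^η(conj(a)⁻¹). Moreover, for all u ∈ Δ_η^{|η|'} and a ∈ (R_{ηη})*, the conjugation identity D^η(a)⁻¹ T^η(u) D^η(a) = T^η(u·a) holds. -/

import Mathlib

/-!
Every element of `Δ` that occurs can be written as `u·X ∔ q_{−η}·Y ∔ q_η·Z ∔ φ(W)`, and products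
of such words, as well as the action of `R ⋊ ℤ` on them, are again of this shape with explicit
coordinates. Since `φ` is central and kills symmetric elements, each claim becomes a handful of
identities in `R`. These are checked in the Peirce decomposition for `e_η, e_{−η}`: after
replacing `a` by `e_η a e_η` (and `π(u)`, `ρ(u)` by `π(u) e_η`, `e_{−η} ρ(u) e_η`), products
across different corners vanish by the idempotent relations alone, and the remaining words are
reduced by `a a⁻¹ = e_η` and `conj(π(u)) π(u) = -(ρ(u) + conj(ρ(u)))`.
-/

open scoped commutatorElement

/-- An odd form ring `(R, Δ)`: a non-unital ring `R` with involution `conj`,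
a group `Δ` with a right action of the multiplicative semigroup `R^•` and
structure maps `phi : R → Δ`, `pi ρ : Δ → R` satisfying the odd form ring
axioms.  The group operation of `Δ` (written `∔` in the paper) is written
multiplicatively here. -/
structure OddForm (R Δ : Type*) [NonUnitalRing R] [Group Δ] where
  conj : R → R
  conj_add : ∀ a b, conj (a + b) = conj a + conj b
  conj_mul : ∀ a b, conj (a * b) = conj b * conj a
  conj_conj : ∀ a, conj (conj a) = a
  act : Δ → R → Δ
  act_mul : ∀ u v a, act (u * v) a = act u a * act v a
  act_act : ∀ u a b, act (act u a) b = act u (a * b)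
  phi : R → Δ
  pi : Δ → R
  rho : Δ → R
  pi_mul : ∀ u v, pi (u * v) = pi u + pi v
  pi_act : ∀ u a, pi (act u a) = pi u * a
  phi_add : ∀ a b, phi (a + b) = phi a * phi b
  phi_act : ∀ a b, act (phi b) a = phi (conj a * b * a)
  rho_mul : ∀ u v, rho (u * v) = rho u - conj (pi u) * pi v + rho v
  rho_act : ∀ u a, rho (act u a) = conj a * rho u * a
  rho_pi : ∀ u, rho u + conj (rho u) + conj (pi u) * pi u = 0
  pi_phi : ∀ a, pi (phi a) = 0
  rho_phi : ∀ a, rho (phi a) = a - conj a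
  comm_phi : ∀ u v, ⁅u, v⁆ = phi (-(conj (pi u) * pi v))
  phi_symm : ∀ a, conj a = a → phi a = 1
  act_addR : ∀ u a b, act u (a + b) = act u a * phi (conj b * rho u * a) * act u b

namespace OddForm

variable {R Δ : Type*} [NonUnitalRing R] [Group Δ]

/-- The action of `a + 1` (an element of the unitalization `R ⋊ ℤ`) on `Δ`:
`u · (a + 1) = u·a ∔ φ(ρ(u) a) ∔ u`. -/
def actA (o : OddForm R Δ) (u : Δ) (a : R) : Δ :=
  o.act u a * o.phi (o.rho u * a) * u

/-- Membership in the unitary group `U(R, Δ)`: for `g = (β, γ)` with `α = β + 1`,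
`α⁻¹ = conj α` (expressed without the unitalization) together with `π(γ) = β` and
`ρ(γ) = conj β`. -/
def umem (o : OddForm R Δ) (g : R × Δ) : Prop :=
  g.1 * o.conj g.1 + g.1 + o.conj g.1 = 0 ∧
  o.conj g.1 * g.1 + o.conj g.1 + g.1 = 0 ∧
  o.pi g.2 = g.1 ∧ o.rho g.2 = o.conj g.1

/-- The group operation of the unitary group: `α(gg') = α(g) α(g')` and
`γ(gg') = γ(g) · α(g') ∔ γ(g')`. -/
def umul (o : OddForm R Δ) (g h : R × Δ) : R × Δ :=
  (g.1 * h.1 + g.1 + h.1, o.actA g.2 h.1 * h.2)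

/-- The identity element of the unitary group. -/
def uone (o : OddForm R Δ) : R × Δ := ((0 : R), (1 : Δ))

/-- The inverse in the unitary group: `β(g⁻¹) = conj β(g)`,
`γ(g⁻¹) = (γ(g) · conj α(g))⁻¹`. -/
def uinv (o : OddForm R Δ) (g : R × Δ) : R × Δ :=
  (o.conj g.1, (o.actA g.2 (o.conj g.1))⁻¹)

end OddForm

namespace OddForm

variable {R Δ : Type*} [NonUnitalRing R] [Group Δ]

/-- `η = (em, ep, qm, qp)` is a hyperbolic pair: `ep = e_η`, `em = e_{−η}` are
orthogonal idempotents with `em = conj ep`, and `qp = q_η`, `qm = q_{−η}` satisfy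
`π(q_{±η}) = e_{±η}`, `ρ(q_{±η}) = 0`, `q_{±η} = q_{±η}·e_{±η}`. -/
def IsHPair (o : OddForm R Δ) (em ep : R) (qm qp : Δ) : Prop :=
  ep * ep = ep ∧ em * em = em ∧ ep * em = 0 ∧ em * ep = 0 ∧
  o.conj ep = em ∧
  o.pi qp = ep ∧ o.pi qm = em ∧ o.rho qp = 0 ∧ o.rho qm = 0 ∧
  o.act qp ep = qp ∧ o.act qm em = qm

/-- Membership in `Δ_η^{|η|'} = {u ∈ Δ·e_η | e_{|η|} π(u) = 0}`. -/
def Dmem (o : OddForm R Δ) (em ep : R) (u : Δ) : Prop :=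
  o.act u ep = u ∧ (ep + em) * o.pi u = 0

/-- The transvection `T^η(u)`, as an element of `R × Δ`:
`β = ρ(u) + π(u) − conj π(u)`,
`γ = u ∔ q_{−η}·(ρ(u) − conj π(u)) ∸ φ(ρ(u) + π(u))`. -/
def Tv (o : OddForm R Δ) (qm : Δ) (u : Δ) : R × Δ :=
  (o.rho u + o.pi u - o.conj (o.pi u),
   u * o.act qm (o.rho u - o.conj (o.pi u)) * (o.phi (o.rho u + o.pi u))⁻¹)

/-- `a` and `b` are mutually inverse elements of the unital ring
`R_{ηη} = e_η R e_η` (with identity `ep`). -/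
def IsInvPair (ep a b : R) : Prop :=
  a = ep * a * ep ∧ b = ep * b * ep ∧ a * b = ep ∧ b * a = ep

/-- The elementary dilation `D^η(a)` (with `b = a⁻¹` in `R_{ηη}`):
`β = a + conj(a)⁻¹ − e_{|η|}`,
`γ = q_{−η}·(conj(a)⁻¹ − e_{−η}) ∔ q_η·(a − e_η) ∸ φ(a − e_η)`. -/
def Dil (o : OddForm R Δ) (em ep : R) (qm qp : Δ) (a b : R) : R × Δ :=
  (a + o.conj b - (ep + em),
   o.act qm (o.conj b - em) * o.act qp (a - ep) * (o.phi (a - ep))⁻¹)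

/-- Membership in the maximal parabolic subgroup `P_η`. -/
def Pmem (o : OddForm R Δ) (em ep : R) (qm : Δ) (g : R × Δ) : Prop :=
  o.umem g ∧ g.1 * em = em * g.1 * em ∧ ep * g.1 = ep * g.1 * ep ∧
  o.act g.2 em = o.act qm (g.1 * em)

/-- Membership in the smaller unitary group `U_{|η|'}`. -/
def Uprime (o : OddForm R Δ) (em ep : R) (g : R × Δ) : Prop :=
  o.umem g ∧ g.1 * (ep + em) = 0 ∧ (ep + em) * g.1 = 0 ∧ o.act g.2 (ep + em) = 1

end OddForm


namespace OddForm

variable {R Δ : Type*} [NonUnitalRing R] [Group Δ] (o : OddForm R Δ)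

section Basic

theorem conj_zero : o.conj 0 = 0 := by
  simpa using o.conj_add 0 0

theorem conj_neg (a : R) : o.conj (-a) = -o.conj a :=
  (AddMonoidHom.mk' o.conj o.conj_add).map_neg a

theorem phi_zero : o.phi 0 = 1 := by
  simpa using o.phi_add 0 0

theorem phi_neg (a : R) : o.phi (-a) = (o.phi a)⁻¹ :=
  eq_inv_of_mul_eq_one_left (by rw [← o.phi_add, neg_add_cancel, o.phi_zero])

theorem phi_eq_phi_of_conj_sub {W W' : R} (h : o.conj (W - W') = W - W') :
    o.phi W = o.phi W' := by
  rw [← sub_add_cancel W W', o.phi_add, o.phi_symm _ h, one_mul]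

theorem pi_one : o.pi 1 = 0 := by
  simpa using o.pi_mul 1 1

theorem act_zero (u : Δ) : o.act u 0 = 1 := by
  simpa [o.conj_zero, o.phi_zero] using o.act_addR u 0 0

theorem commute_phi (c : R) (v : Δ) : Commute (o.phi c) v := by
  refine (commutatorElement_eq_one_iff_mul_comm.mp ?_).symm
  rw [o.comm_phi, o.pi_phi, mul_zero, neg_zero, o.phi_zero]

theorem mul_phi_mul (c : R) (x y : Δ) : x * (o.phi c * y) = o.phi c * (x * y) :=
  ((o.commute_phi c x).left_comm y).symm

-- Stated for `act` only, so that as simp lemmas these move `φ`-factors left without looping.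
theorem act_mul_phi (s : Δ) (S c : R) : o.act s S * o.phi c = o.phi c * o.act s S :=
  ((o.commute_phi c _).eq).symm

theorem act_mul_phi_mul (s : Δ) (S c : R) (y : Δ) :
    o.act s S * (o.phi c * y) = o.phi c * (o.act s S * y) :=
  o.mul_phi_mul c _ y

theorem phi_mul_phi_mul (c d : R) (x : Δ) : o.phi c * (o.phi d * x) = o.phi (c + d) * x := by
  rw [← mul_assoc, ← o.phi_add]

theorem mul_eq_phi_mul_mul (v w : Δ) :
    v * w = o.phi (-(o.conj (o.pi v) * o.pi w)) * (w * v) := by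
  rw [← o.comm_phi, commutatorElement_def]
  group

theorem commute_of_conj_pi_mul_pi {v w : Δ} (h : o.conj (o.pi v) * o.pi w = 0) :
    Commute v w := by
  rw [Commute, SemiconjBy, o.mul_eq_phi_mul_mul v w, h, neg_zero, o.phi_zero, one_mul]

theorem act_mul_act (u : Δ) (A B : R) :
    o.act u A * o.act u B = o.act u (A + B) * o.phi (-(o.conj B * o.rho u * A)) := by
  rw [o.act_addR, mul_assoc (o.act u A), (o.commute_phi _ _).eq, mul_assoc, mul_assoc,
    ← o.phi_add, add_neg_cancel, o.phi_zero, mul_one]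

theorem actA_mul (v w : Δ) (s : R) : o.actA (v * w) s = o.actA v s * o.actA w s := by
  simp only [actA, o.act_mul, o.rho_mul, mul_assoc]
  rw [← mul_assoc v (o.act w s), o.mul_eq_phi_mul_mul v (o.act w s), o.pi_act]
  simp only [mul_assoc, o.mul_phi_mul _ v, o.act_mul_phi_mul, o.phi_mul_phi_mul]
  congr 3
  simp only [sub_mul, add_mul, mul_assoc]
  abel

theorem actA_act (v : Δ) (X s : R) : o.actA (o.act v X) s = o.act v (X * s + X) := by
  rw [actA, o.act_act, o.rho_act, mul_assoc, o.act_mul_phi_mul, o.act_mul_act, o.act_mul_phi,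
    ← mul_assoc, ← o.phi_add, mul_assoc, mul_assoc, add_neg_cancel, o.phi_zero, one_mul]

theorem actA_phi (c s : R) :
    o.actA (o.phi c) s = o.phi (o.conj s * c * s + (c - o.conj c) * s + c) := by
  rw [actA, o.phi_act, o.rho_phi, ← o.phi_add, ← o.phi_add]

end Basic

section NormalForm

def normalForm (u v w : Δ) (X Y Z W : R) : Δ :=
  o.act u X * o.act v Y * o.act w Z * o.phi W

theorem normalForm_congr {u v w : Δ} {X Y Z W X' Y' Z' W' : R} (hX : X = X') (hY : Y = Y')
    (hZ : Z = Z') (hW : o.conj (W - W') = W - W') :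
    o.normalForm u v w X Y Z W = o.normalForm u v w X' Y' Z' W' := by
  rw [normalForm, normalForm, hX, hY, hZ, o.phi_eq_phi_of_conj_sub hW]

theorem normalForm_mul {u v w : Δ} (hv : o.conj (o.pi v) * o.pi u = 0)
    (hw : o.conj (o.pi w) * o.pi u = 0) (X Y Z W X' Y' Z' W' : R) :
    o.normalForm u v w X Y Z W * o.normalForm u v w X' Y' Z' W'
      = o.normalForm u v w (X + X') (Y + Y') (Z + Z')
          (W + W' - o.conj X' * o.rho u * X - o.conj Y' * o.rho v * Y
            - o.conj Z' * o.rho w * Z - o.conj (o.pi w * Z) * (o.pi v * Y')) := by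
  have orth {s : Δ} (hs : o.conj (o.pi s) * o.pi u = 0) (S : R) :
      Commute (o.act s S) (o.act u X') := by
    refine o.commute_of_conj_pi_mul_pi ?_
    rw [o.pi_act, o.pi_act, o.conj_mul, mul_assoc, ← mul_assoc (o.conj (o.pi s)), hs,
      zero_mul, mul_zero]
  simp only [normalForm, mul_assoc, o.act_mul_phi_mul, o.act_mul_phi, o.phi_mul_phi_mul]
  rw [(orth hw Z).left_comm, (orth hv Y).left_comm, ← mul_assoc (o.act u X), o.act_mul_act,
    ← mul_assoc (o.act w Z), o.mul_eq_phi_mul_mul (o.act w Z)]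
  simp only [mul_assoc, o.act_mul_phi_mul, o.act_mul_phi, o.phi_mul_phi_mul]
  rw [o.act_mul_act, ← mul_assoc (o.act v Y), o.act_mul_act]
  simp only [mul_assoc, o.act_mul_phi_mul, o.act_mul_phi, o.phi_mul_phi_mul]
  congr 2
  simp only [o.pi_act, sub_eq_add_neg]
  abel

theorem actA_normalForm (u v w : Δ) (X Y Z W s : R) :
    o.actA (o.normalForm u v w X Y Z W) s
      = o.normalForm u v w (X * s + X) (Y * s + Y) (Z * s + Z)
          (o.conj s * W * s + (W - o.conj W) * s + W) := by
  simp only [normalForm, o.actA_mul, o.actA_act, o.actA_phi]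

theorem snd_dil_eq_normalForm (em ep : R) (u qm qp : Δ) (a b : R) :
    (Dil o em ep qm qp a b).2 = o.normalForm u qm qp 0 (o.conj b - em) (a - ep) (ep - a) := by
  rw [Dil, normalForm, o.act_zero, one_mul, ← o.phi_neg, neg_sub]

theorem snd_tv_eq_normalForm {qm : Δ} (qp : Δ) {u v : Δ} {X : R} (h : o.act v X = u) :
    (Tv o qm u).2
      = o.normalForm v qm qp X (o.rho u - o.conj (o.pi u)) 0 (-(o.rho u + o.pi u)) := by
  rw [Tv, normalForm, o.act_zero, mul_one, h, ← o.phi_neg]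

end NormalForm

end OddForm

/-- `x * y = z`, also in the form in which it rewrites inside right-associated products. -/
abbrev MulRule {M : Type*} [Semigroup M] (x y z : M) : Prop :=
  x * y = z ∧ ∀ w, x * (y * w) = z * w

theorem MulRule.of_eq {M : Type*} [Semigroup M] {x y z : M} (h : x * y = z) : MulRule x y z :=
  ⟨h, fun w => by rw [← mul_assoc, h]⟩

namespace OddForm

variable {R Δ : Type*} [NonUnitalRing R] [Group Δ] {o : OddForm R Δ} {em ep : R} {qm qp : Δ}

section PeirceRules

theorem IsHPair.conj_em (hη : IsHPair o em ep qm qp) : o.conj em = ep := by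
  rw [← hη.2.2.2.2.1, o.conj_conj]

theorem IsHPair.mulRules (hη : IsHPair o em ep qm qp) :
    MulRule ep ep ep ∧ MulRule em em em ∧ MulRule ep em 0 ∧ MulRule em ep 0 :=
  ⟨.of_eq hη.1, .of_eq hη.2.1, .of_eq hη.2.2.1, .of_eq hη.2.2.2.1⟩

theorem IsInvPair.symm {a b : R} (h : IsInvPair ep a b) : IsInvPair ep b a :=
  ⟨h.2.1, h.1, h.2.2.2, h.2.2.1⟩

theorem IsInvPair.mul_ep (hη : IsHPair o em ep qm qp) {a b : R} (h : IsInvPair ep a b) :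
    a * ep = a := by
  rw [h.1, mul_assoc _ ep, hη.1]

theorem IsInvPair.mul_ep_mul (hη : IsHPair o em ep qm qp) {a b : R} (h : IsInvPair ep a b)
    (w : R) : a * (ep * (b * w)) = ep * w := by
  rw [← mul_assoc, ← mul_assoc, h.mul_ep hη, h.2.2.1]

theorem IsInvPair.conj_mul_em_mul (hη : IsHPair o em ep qm qp) {a b : R} (h : IsInvPair ep a b)
    (w : R) : o.conj a * (em * (o.conj b * w)) = em * w := by
  rw [← hη.2.2.2.2.1, ← mul_assoc, ← mul_assoc, ← o.conj_mul, ← o.conj_mul, ← mul_assoc,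
    h.symm.mul_ep hη, h.2.2.2]

theorem IsInvPair.mulRules (hη : IsHPair o em ep qm qp) {a b : R} (h : IsInvPair ep a b) :
    (∀ w, a * (ep * (b * w)) = ep * w) ∧ (∀ w, b * (ep * (a * w)) = ep * w) ∧
    (∀ w, o.conj a * (em * (o.conj b * w)) = em * w) ∧
    (∀ w, o.conj b * (em * (o.conj a * w)) = em * w) :=
  ⟨h.mul_ep_mul hη, h.symm.mul_ep_mul hη, h.conj_mul_em_mul hη, h.symm.conj_mul_em_mul hη⟩

theorem Dmem.pi_mul_ep {u : Δ} (hu : Dmem o em ep u) : o.pi u * ep = o.pi u := by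
  rw [← o.pi_act, hu.1]

theorem Dmem.rho_eq (hη : IsHPair o em ep qm qp) {u : Δ} (hu : Dmem o em ep u) :
    o.rho u = em * o.rho u * ep := by
  calc o.rho u = o.rho (o.act u ep) := by rw [hu.1]
    _ = em * o.rho u * ep := by rw [o.rho_act, hη.2.2.2.2.1]

theorem Dmem.ep_mul_pi (hη : IsHPair o em ep qm qp) {u : Δ} (hu : Dmem o em ep u) :
    ep * o.pi u = 0 := by
  rw [← mul_zero ep, ← hu.2, ← mul_assoc, mul_add, hη.1, hη.2.2.1, add_zero]

theorem Dmem.em_mul_pi (hη : IsHPair o em ep qm qp) {u : Δ} (hu : Dmem o em ep u) :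
    em * o.pi u = 0 := by
  rw [← mul_zero em, ← hu.2, ← mul_assoc, mul_add, hη.2.1, hη.2.2.2.1, zero_add]

theorem Dmem.mulRules (hη : IsHPair o em ep qm qp) {u : Δ} (hu : Dmem o em ep u) :
    (∀ w, ep * (o.pi u * w) = 0) ∧ (∀ w, em * (o.pi u * w) = 0) ∧
    MulRule (o.conj (o.pi u)) ep 0 ∧ MulRule (o.conj (o.pi u)) em 0 ∧
    (∀ w, o.conj (o.pi u) * (o.pi u * w) = -(o.rho u + o.conj (o.rho u)) * w) := by
  have conj_pi_mul {e f : R} (he : o.conj f = e) (hf : f * o.pi u = 0) :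
      MulRule (o.conj (o.pi u)) e 0 := by
    refine .of_eq ?_
    rw [← he, ← o.conj_mul, hf, o.conj_zero]
  refine ⟨fun w => ?_, fun w => ?_, conj_pi_mul hη.conj_em (hu.em_mul_pi hη),
    conj_pi_mul hη.2.2.2.2.1 (hu.ep_mul_pi hη), fun w => ?_⟩
  · rw [← mul_assoc, hu.ep_mul_pi hη, zero_mul]
  · rw [← mul_assoc, hu.em_mul_pi hη, zero_mul]
  · rw [← mul_assoc, eq_neg_of_add_eq_zero_right (o.rho_pi u)]

end PeirceRules

section Dilation

variable {a b : R}

theorem umem_dil (hη : IsHPair o em ep qm qp) (h : IsInvPair ep a b) :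
    o.umem (Dil o em ep qm qp a b) := by
  have ⟨_, _, _, _, hcp, hπp, hπm, hρp, hρm, _, _⟩ := hη
  rw [h.1, h.2.1]
  simp only [umem, Dil, o.pi_mul, o.pi_act, ← o.phi_neg, o.pi_phi, o.rho_mul, o.rho_act,
    o.rho_phi, hπp, hπm, hρp, hρm]
  refine ⟨?_, ?_, ?_, ?_⟩ <;>
  · simp only [sub_eq_add_neg, neg_add_rev, neg_neg, mul_add, add_mul, mul_neg, neg_mul, mul_assoc,
      mul_zero, zero_mul, add_zero, zero_add, neg_zero, o.conj_add, o.conj_neg, o.conj_mul,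
      o.conj_conj, hcp, hη.conj_em, hη.mulRules, h.mulRules hη]
    abel

theorem dil_mul_dil (hη : IsHPair o em ep qm qp) {a' b' : R} (h : IsInvPair ep a b)
    (h' : IsInvPair ep a' b') :
    o.umul (Dil o em ep qm qp a b) (Dil o em ep qm qp a' b') =
      Dil o em ep qm qp (a * a') (b' * b) := by
  have ⟨_, _, _, _, hcp, hπp, hπm, hρp, hρm, _, _⟩ := hη
  have orth_one (s : Δ) : o.conj (o.pi s) * o.pi 1 = 0 := by rw [o.pi_one, mul_zero]
  rw [h.1, h.2.1, h'.1, h'.2.1]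
  refine Prod.ext ?_ ?_
  · simp only [umul, Dil, sub_eq_add_neg, neg_add_rev, neg_neg, mul_add, add_mul, mul_neg, neg_mul,
      mul_assoc, mul_zero, zero_mul, add_zero, zero_add, neg_zero, o.conj_mul, hcp, hη.mulRules]
    abel
  · rw [umul, o.snd_dil_eq_normalForm em ep 1, o.snd_dil_eq_normalForm em ep 1,
      o.snd_dil_eq_normalForm em ep 1, o.actA_normalForm, o.normalForm_mul (orth_one qm) (orth_one qp)]
    refine o.normalForm_congr (by simp) ?_ ?_ ?_ <;>
    · simp only [Dil, hπp, hπm, hρp, hρm, sub_eq_add_neg, neg_add_rev, neg_neg, mul_add, add_mul,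
        mul_neg, neg_mul, mul_assoc, mul_zero, zero_mul, add_zero, zero_add, neg_zero, o.conj_add,
        o.conj_neg, o.conj_mul, o.conj_conj, hcp, hη.conj_em, hη.mulRules, h'.mulRules hη]
      abel

theorem ep_mul_fst_dil_mul_ep (hη : IsHPair o em ep qm qp) (h : IsInvPair ep a b) :
    ep * (Dil o em ep qm qp a b).1 * ep = a - ep := by
  rw [h.1, h.2.1]
  simp only [Dil, sub_eq_add_neg, neg_add_rev, mul_add, add_mul, mul_neg, neg_mul, mul_assoc,
    o.conj_mul, hη.2.2.2.2.1, hη.mulRules, zero_mul, neg_zero, add_zero, zero_add]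

theorem eq_of_dil_eq (hη : IsHPair o em ep qm qp) {a' b' : R} (h : IsInvPair ep a b)
    (h' : IsInvPair ep a' b') (hD : Dil o em ep qm qp a b = Dil o em ep qm qp a' b') :
    a = a' := by
  rw [← sub_left_inj (a := ep), ← ep_mul_fst_dil_mul_ep hη h, ← ep_mul_fst_dil_mul_ep hη h', hD]

theorem dil_swap (hη : IsHPair o em ep qm qp) (h : IsInvPair ep a b) :
    Dil o ep em qp qm (o.conj a) (o.conj b) = Dil o em ep qm qp b a := by
  have ⟨_, _, _, _, hcp, hπp, hπm, _, _, _, _⟩ := hη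
  rw [h.1, h.2.1]
  refine Prod.ext ?_ ?_
  · simp only [Dil, o.conj_conj]
    abel
  · simp only [Dil, o.conj_conj]
    rw [o.mul_eq_phi_mul_mul (o.act qp _) (o.act qm _)]
    simp only [← o.phi_neg, o.pi_act, hπp, hπm, mul_assoc, o.act_mul_phi_mul, o.act_mul_phi,
      o.phi_mul_phi_mul]
    rw [o.phi_eq_phi_of_conj_sub]
    simp only [sub_eq_add_neg, neg_add_rev, neg_neg, mul_add, add_mul, mul_neg, neg_mul, mul_assoc,
      o.conj_add, o.conj_neg, o.conj_mul, o.conj_conj, hcp, hη.conj_em, hη.mulRules,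
      h.mulRules hη]
    abel

theorem dil_mul_tv_mul_dil (hη : IsHPair o em ep qm qp) {u : Δ} (h : IsInvPair ep a b)
    (hu : Dmem o em ep u) :
    o.umul (o.umul (Dil o em ep qm qp b a) (Tv o qm u)) (Dil o em ep qm qp a b) =
      Tv o qm (o.act u a) := by
  have ⟨_, _, _, _, hcp, hπp, hπm, hρp, hρm, _, _⟩ := hη
  have hm : o.conj (o.pi qm) * o.pi u = 0 := by rw [hπm, hη.conj_em, hu.ep_mul_pi hη]
  have hp : o.conj (o.pi qp) * o.pi u = 0 := by rw [hπp, hcp, hu.em_mul_pi hη]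
  rw [h.1, h.2.1]
  refine Prod.ext ?_ ?_
  · simp only [umul, Dil, Tv, o.rho_act, o.pi_act]
    rw [← hu.pi_mul_ep, hu.rho_eq hη]
    simp only [sub_eq_add_neg, neg_add_rev, neg_neg, mul_add, add_mul, mul_neg, neg_mul, mul_assoc,
      mul_zero, zero_mul, add_zero, zero_add, neg_zero, o.conj_mul, hcp, hη.mulRules,
      h.mulRules hη, hu.mulRules hη]
    abel
  · rw [umul, umul, o.snd_dil_eq_normalForm em ep u, o.snd_dil_eq_normalForm em ep u,
      o.snd_tv_eq_normalForm qp hu.1, o.snd_tv_eq_normalForm qp rfl, o.actA_normalForm,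
      o.normalForm_mul hm hp, o.actA_normalForm, o.normalForm_mul hm hp]
    simp only [Dil, Tv, o.rho_act, o.pi_act]
    rw [← hu.pi_mul_ep, hu.rho_eq hη]
    refine o.normalForm_congr ?_ ?_ ?_ ?_ <;>
    · simp only [hπp, hπm, hρp, hρm, sub_eq_add_neg, neg_add_rev, neg_neg, mul_add, add_mul,
        mul_neg, neg_mul, mul_assoc, mul_zero, zero_mul, add_zero, zero_add, neg_zero, o.conj_add,
        o.conj_neg, o.conj_mul, o.conj_conj, o.conj_zero, hcp, hη.conj_em, hη.mulRules,
        h.mulRules hη, hu.mulRules hη]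
      abel

end Dilation

end OddForm

open OddForm in
/-- Invertible elements of `R_{ηη}` are represented by inverse pairs `(a, b)`;
`Dil o em ep qm qp a b` is `D^η(a)` and `Dil o ep em qp qm (conj a) (conj b)` is
`D^{−η}(conj a)`, so the fourth conjunct is `D^{−η}(ā) = D^η(ā̄⁻¹) = D^η(a⁻¹)`. -/
theorem dilation_injective_hom {R Δ : Type*} [NonUnitalRing R] [Group Δ]
    (o : OddForm R Δ) (em ep : R) (qm qp : Δ) (hη : IsHPair o em ep qm qp) :
    (∀ a b : R, IsInvPair ep a b → o.umem (Dil o em ep qm qp a b)) ∧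
    (∀ a b a' b' : R, IsInvPair ep a b → IsInvPair ep a' b' →
      o.umul (Dil o em ep qm qp a b) (Dil o em ep qm qp a' b') =
        Dil o em ep qm qp (a * a') (b' * b)) ∧
    (∀ a b a' b' : R, IsInvPair ep a b → IsInvPair ep a' b' →
      Dil o em ep qm qp a b = Dil o em ep qm qp a' b' → a = a') ∧
    (∀ a b : R, IsInvPair ep a b →
      Dil o ep em qp qm (o.conj a) (o.conj b) = Dil o em ep qm qp b a) ∧
    (∀ (a b : R) (u : Δ), IsInvPair ep a b → Dmem o em ep u →
      o.umul (o.umul (Dil o em ep qm qp b a) (Tv o qm u)) (Dil o em ep qm qp a b) =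
        Tv o qm (o.act u a)) := by
  exact ⟨fun _ _ h => umem_dil hη h, fun _ _ _ _ h h' => dil_mul_dil hη h h',
    fun _ _ _ _ h h' => eq_of_dil_eq hη h h', fun _ _ h => dil_swap hη h,
    fun _ _ _ h hu => dil_mul_tv_mul_dil hη h hu⟩
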